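/- For Q ≠ 0 and T = 2n⊗_sX − QP of gauge weight r, the tensor V_T := 2ℓ⊗_sX̂ + Qℓ⊗ℓ + (1/Q)X̂⊗X̂ − (1/(n−1))(Qℓ⁽²⁾ + 2ℓ(X) + (1/Q)X̂(X))γ, where X̂ := γ(X,·), satisfies τ(V_T) = T and has gauge weight r+2 (i.e., its gauge transform equals z^{r+2}V_T). -/

import Mathlib

/-!
For `Q ≠ 0` write `θ := X̂ + Qℓ` and `N := γ(X,X) + 2Qℓ(X) + Q²ℓ⁽²⁾`; then
`V_T = Q⁻¹(θ ⊗ θ - N/(𝔫-1) γ)`. The gauge transformation multiplies `θ` by `z^{r+1}`, `N` by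
`z^{2r+2}` (the `ζ`-terms cancel by the symmetry of `γ`) and `Q⁻¹` by `z^{-r}`, so `V_T` has
weight `r + 2`. For `τ`: since `γ(n,·) = 0` and `ℓ(n) = 1`, we get `V_T(n,·) = θ`, `θ(n) = Q` and
`P(θ) = X - (ℓ(X) + Qℓ⁽²⁾)n`, while `tr_P γ = 𝔫 - 1` lets the `γ`-term of `V_T` cancel the
quadratic terms of the trace, so `tr_P V_T = -2(ℓ(X) + Qℓ⁽²⁾)`.
-/

open Module LinearMap

variable {V : Type*} [AddCommGroup V] [Module ℝ V] [FiniteDimensional ℝ V]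

/-- The trace `P^{ab} W_{ab}`. -/
noncomputable def trP (P : Dual ℝ V →ₗ[ℝ] V) (W : V →ₗ[ℝ] Dual ℝ V) : ℝ :=
  LinearMap.trace ℝ V (P ∘ₗ W)

/-- The energy-momentum map, evaluated on two covectors. -/
noncomputable def tau (P : Dual ℝ V →ₗ[ℝ] V) (n : V) (W : V →ₗ[ℝ] Dual ℝ V)
    (ω χ : Dual ℝ V) : ℝ :=
  ω n * χ (P (W n)) + χ n * ω (P (W n)) - W n n * χ (P ω) - ω n * χ n * trP P W

/-- The tensor `V_T := 2ℓ⊗ₛX̂ + Qℓ⊗ℓ + Q⁻¹X̂⊗X̂ - (1/(𝔫-1))(Qℓ⁽²⁾ + 2ℓ(X) + Q⁻¹X̂(X))γ`,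
where `X̂ := γ(X,·)`. -/
noncomputable def vT (γ : V →ₗ[ℝ] Dual ℝ V) (ℓ : Dual ℝ V) (l2 : ℝ) (𝔫 : ℕ)
    (X : V) (Q : ℝ) : V →ₗ[ℝ] Dual ℝ V :=
  ℓ.smulRight (γ X) + (γ X).smulRight ℓ + Q • ℓ.smulRight ℓ
    + Q⁻¹ • (γ X).smulRight (γ X)
    - ((Q * l2 + 2 * ℓ X + Q⁻¹ * γ X X) / ((𝔫 : ℝ) - 1)) • γ

lemma LinearMap.trace_comp_smulRight {R M N : Type*} [CommRing R] [AddCommGroup M] [Module R M]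
    [Free R M] [Module.Finite R M] [AddCommGroup N] [Module R N]
    (g : N →ₗ[R] M) (f : M →ₗ[R] R) (x : N) :
    trace R M (g ∘ₗ f.smulRight x) = f (g x) := by
  have h : g ∘ₗ f.smulRight x = f.smulRight (g x) := by ext; simp
  rw [h, trace_smulRight]

lemma LinearMap.trace_comp_eq_finrank_sub_one {K M N : Type*} [Field K] [AddCommGroup M]
    [Module K M] [FiniteDimensional K M] [AddCommGroup N] [Module K N]
    {P : N →ₗ[K] M} {γ : M →ₗ[K] N} {ℓ : Dual K M} {n : M}
    (hPγ : ∀ x, P (γ x) + ℓ x • n = x) (hℓn : ℓ n = 1) :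
    trace K M (P ∘ₗ γ) = finrank K M - 1 := by
  have h : P ∘ₗ γ = id - ℓ.smulRight n := by
    ext x
    simp [eq_sub_of_add_eq (hPγ x)]
  rw [h, map_sub, trace_id, trace_smulRight, hℓn]

section

variable {W : Type*} [AddCommGroup W] [Module ℝ W]

/-- `θ = 𝒜((X,Q),(·,0))` for the ambient metric `𝒜 = (γ ℓ; ℓ ℓ⁽²⁾)` on `W × ℝ`. -/
def ambientCovector (γ : W →ₗ[ℝ] Dual ℝ W) (ℓ : Dual ℝ W) (X : W) (Q : ℝ) : Dual ℝ W :=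
  γ X + Q • ℓ

/-- `N = 𝒜((X,Q),(X,Q))` for the ambient metric `𝒜 = (γ ℓ; ℓ ℓ⁽²⁾)` on `W × ℝ`. -/
def ambientNormSq (γ : W →ₗ[ℝ] Dual ℝ W) (ℓ : Dual ℝ W) (l2 : ℝ) (X : W) (Q : ℝ) : ℝ :=
  γ X X + 2 * Q * ℓ X + Q ^ 2 * l2

variable {γ : W →ₗ[ℝ] Dual ℝ W} {ℓ : Dual ℝ W} {l2 : ℝ} {n : W}

lemma vT_eq_inv_smul (𝔫 : ℕ) (X : W) {Q : ℝ} (hQ : Q ≠ 0) :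
    vT γ ℓ l2 𝔫 X Q = Q⁻¹ • ((ambientCovector γ ℓ X Q).smulRight (ambientCovector γ ℓ X Q)
      - (ambientNormSq γ ℓ l2 X Q / ((𝔫 : ℝ) - 1)) • γ) := by
  ext x y
  simp only [vT, ambientCovector, ambientNormSq, LinearMap.add_apply, LinearMap.sub_apply,
    LinearMap.smul_apply, smulRight_apply, smul_eq_mul]
  field_simp
  ring

lemma vT_eq_smul_of_ambient {ℓ' : Dual ℝ W} {l2' : ℝ} (𝔫 : ℕ) {X X' : W} {Q a b : ℝ}
    (hQ : Q ≠ 0) (hb : b ≠ 0)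
    (hθ : ambientCovector γ ℓ' X' (b * Q) = a • ambientCovector γ ℓ X Q)
    (hN : ambientNormSq γ ℓ' l2' X' (b * Q) = a ^ 2 * ambientNormSq γ ℓ l2 X Q) :
    vT γ ℓ' l2' 𝔫 X' (b * Q) = (b⁻¹ * a ^ 2) • vT γ ℓ l2 𝔫 X Q := by
  rw [vT_eq_inv_smul 𝔫 X' (mul_ne_zero hb hQ), vT_eq_inv_smul 𝔫 X hQ, hθ, hN]
  ext x y
  simp only [LinearMap.sub_apply, LinearMap.smul_apply, smulRight_apply, smul_eq_mul, mul_inv]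
  ring

lemma ambientCovector_gauge (X ζ : W) (Q c z : ℝ) :
    ambientCovector γ (z • (ℓ + γ ζ)) ((c * z) • (X - Q • ζ)) (c * Q)
      = (c * z) • ambientCovector γ ℓ X Q := by
  simp only [ambientCovector, map_smul, map_sub]
  module

lemma ambientNormSq_gauge (hγsym : ∀ x y, γ x y = γ y x) (X ζ : W) (Q c z : ℝ) :
    ambientNormSq γ (z • (ℓ + γ ζ)) (z ^ 2 * (l2 + 2 * ℓ ζ + γ ζ ζ)) ((c * z) • (X - Q • ζ))
        (c * Q) = (c * z) ^ 2 * ambientNormSq γ ℓ l2 X Q := by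
  simp only [ambientNormSq, map_smul, map_sub, LinearMap.add_apply, LinearMap.sub_apply,
    LinearMap.smul_apply, smul_eq_mul, hγsym ζ X]
  ring

lemma vT_gauge (hγsym : ∀ x y, γ x y = γ y x) (𝔫 : ℕ) (X ζ : W) {Q c : ℝ} (hQ : Q ≠ 0)
    (hc : c ≠ 0) (z : ℝ) :
    vT γ (z • (ℓ + γ ζ)) (z ^ 2 * (l2 + 2 * ℓ ζ + γ ζ ζ)) 𝔫 ((c * z) • (X - Q • ζ)) (c * Q)
      = (c * z ^ 2) • vT γ ℓ l2 𝔫 X Q := by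
  rw [vT_eq_smul_of_ambient 𝔫 hQ hc (ambientCovector_gauge X ζ Q c z)
    (ambientNormSq_gauge hγsym X ζ Q c z)]
  congr 1
  field_simp

lemma apply_null_of_symm (hγsym : ∀ x y, γ x y = γ y x) (hγn : γ n = 0) (x : W) : γ x n = 0 := by
  rw [hγsym, hγn, LinearMap.zero_apply]

lemma ambientCovector_apply_null (hγsym : ∀ x y, γ x y = γ y x) (hγn : γ n = 0) (hℓn : ℓ n = 1)
    (X : W) (Q : ℝ) : ambientCovector γ ℓ X Q n = Q := by
  simp [ambientCovector, apply_null_of_symm hγsym hγn, hℓn]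

lemma vT_apply_null (hγsym : ∀ x y, γ x y = γ y x) (hγn : γ n = 0) (hℓn : ℓ n = 1) (𝔫 : ℕ)
    (X : W) (Q : ℝ) : vT γ ℓ l2 𝔫 X Q n = ambientCovector γ ℓ X Q := by
  simp [vT, ambientCovector, apply_null_of_symm hγsym hγn, hγn, hℓn]

lemma map_ambientCovector {P : Dual ℝ W →ₗ[ℝ] W} (hPℓ : P ℓ + l2 • n = 0)
    (hPγ : ∀ x, P (γ x) + ℓ x • n = x) (X : W) (Q : ℝ) :
    P (ambientCovector γ ℓ X Q) = X - (ℓ X + Q * l2) • n := by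
  rw [ambientCovector, map_add, map_smul, eq_sub_of_add_eq (hPγ X), eq_neg_of_add_eq_zero_left hPℓ]
  module

lemma trP_vT [FiniteDimensional ℝ W] {P : Dual ℝ W →ₗ[ℝ] W} (hγsym : ∀ x y, γ x y = γ y x)
    (hγn : γ n = 0) (hℓn : ℓ n = 1) (hPℓ : P ℓ + l2 • n = 0) (hPγ : ∀ x, P (γ x) + ℓ x • n = x)
    {𝔫 : ℕ} (hdim : finrank ℝ W = 𝔫) (h𝔫 : 𝔫 ≠ 1) (X : W) (Q : ℝ) :
    trP P (vT γ ℓ l2 𝔫 X Q) = -2 * (ℓ X + Q * l2) := by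
  have h𝔫' : (𝔫 : ℝ) - 1 ≠ 0 := sub_ne_zero.mpr (by exact_mod_cast h𝔫)
  simp only [trP, vT, comp_add, comp_sub, comp_smul, map_add, map_sub, map_smul, smul_eq_mul,
    trace_comp_smulRight, trace_comp_eq_finrank_sub_one hPγ hℓn, hdim,
    eq_sub_of_add_eq (hPγ X), eq_neg_of_add_eq_zero_left hPℓ, map_neg, hℓn,
    apply_null_of_symm hγsym hγn]
  field_simp
  ring

lemma tau_vT [FiniteDimensional ℝ W] {P : Dual ℝ W →ₗ[ℝ] W} (hγsym : ∀ x y, γ x y = γ y x)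
    (hγn : γ n = 0) (hℓn : ℓ n = 1) (hPℓ : P ℓ + l2 • n = 0) (hPγ : ∀ x, P (γ x) + ℓ x • n = x)
    {𝔫 : ℕ} (hdim : finrank ℝ W = 𝔫) (h𝔫 : 𝔫 ≠ 1) (X : W) (Q : ℝ) (ω χ : Dual ℝ W) :
    tau P n (vT γ ℓ l2 𝔫 X Q) ω χ = ω n * χ X + χ n * ω X - Q * χ (P ω) := by
  rw [tau, vT_apply_null hγsym hγn hℓn, ambientCovector_apply_null hγsym hγn hℓn,
    map_ambientCovector hPℓ hPγ, trP_vT hγsym hγn hℓn hPℓ hPγ hdim h𝔫]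
  simp only [map_sub, map_smul, smul_eq_mul]
  ring

end

theorem vT_preimage_and_gauge_weight_general
    (γ : V →ₗ[ℝ] Dual ℝ V) (ℓ : Dual ℝ V) (l2 : ℝ) (n : V) (P : Dual ℝ V →ₗ[ℝ] V)
    (𝔫 : ℕ) (hdim : finrank ℝ V = 𝔫) (h𝔫 : 2 ≤ 𝔫)
    (hγsym : ∀ x y, γ x y = γ y x)
    (hγn : γ n = 0)
    (hℓn : ℓ n = 1)
    (hPℓ : P ℓ + l2 • n = 0)
    (hPγ : ∀ x : V, P (γ x) + ℓ x • n = x)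
    (X : V) (Q : ℝ) (hQ : Q ≠ 0)
    (z : ℝ) (hz : z ≠ 0) (ζ : V) (r : ℤ) :
    (∀ ω χ : Dual ℝ V,
      tau P n (vT γ ℓ l2 𝔫 X Q) ω χ = ω n * χ X + χ n * ω X - Q * χ (P ω)) ∧
    vT γ (z • (ℓ + γ ζ)) (z ^ 2 * (l2 + 2 * ℓ ζ + γ ζ ζ)) 𝔫
        ((z ^ (r + 1) : ℝ) • (X - Q • ζ)) (z ^ r * Q)
      = (z ^ (r + 2) : ℝ) • vT γ ℓ l2 𝔫 X Q := by
  refine ⟨tau_vT hγsym hγn hℓn hPℓ hPγ hdim (by omega) X Q, ?_⟩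
  rw [zpow_add_one₀ hz, zpow_add₀ hz, zpow_ofNat]
  exact vT_gauge hγsym 𝔫 X ζ hQ (zpow_ne_zero r hz) z

/-- For `Q ≠ 0` and `T = 2n⊗ₛX - QP` of gauge weight `r`, the tensor `V_T` satisfies
`τ(V_T) = T` and has gauge weight `r + 2`: the tensor built from the gauge-transformed
data and components equals `z^{r+2} V_T`. -/
theorem vT_preimage_and_gauge_weight
    (γ : V →ₗ[ℝ] Dual ℝ V) (ℓ : Dual ℝ V) (l2 : ℝ) (n : V) (P : Dual ℝ V →ₗ[ℝ] V)
    (𝔫 : ℕ) (hdim : finrank ℝ V = 𝔫) (h𝔫 : 2 ≤ 𝔫)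
    (hγsym : ∀ x y, γ x y = γ y x)
    (hγn : γ n = 0)
    (hℓn : ℓ n = 1)
    (hPsym : ∀ ω χ : Dual ℝ V, ω (P χ) = χ (P ω))
    (hPℓ : P ℓ + l2 • n = 0)
    (hPγ : ∀ x : V, P (γ x) + ℓ x • n = x)
    (X : V) (Q : ℝ) (hQ : Q ≠ 0)
    (z : ℝ) (hz : z ≠ 0) (ζ : V) (r : ℤ) :
    (∀ ω χ : Dual ℝ V,
      tau P n (vT γ ℓ l2 𝔫 X Q) ω χ = ω n * χ X + χ n * ω X - Q * χ (P ω)) ∧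
    vT γ (z • (ℓ + γ ζ)) (z ^ 2 * (l2 + 2 * ℓ ζ + γ ζ ζ)) 𝔫
        ((z ^ (r + 1) : ℝ) • (X - Q • ζ)) (z ^ r * Q)
      = (z ^ (r + 2) : ℝ) • vT γ ℓ l2 𝔫 X Q :=
  vT_preimage_and_gauge_weight_general γ ℓ l2 n P 𝔫 hdim h𝔫 hγsym hγn hℓn hPℓ hPγ X Q hQ z hz ζ r
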